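/- Let j ≥ 1 and s ≥ 0 be integers, let w be a word of length n over an alphabet Σ, let f : Σ → Σ be an involution and φ the induced antimorphic involution on words. Then w contains a factor of the form x^j φ(x) for some nonempty word x with |x| > s if and only if there exists an index i with 1 ≤ i ≤ n such that mp_s^j((w[1..i])^R) ≤ cmp_w[i]. -/

import Mathlib

/-!
A factor `x^j φ(x)` of `w` is cut by some position `i` into `x^j`, ending at `i`, and `φ(x)`,
starting at `i`. Read backwards, `x^j` ending at `i` is the power `(x^R)^j` at the start of
`(w[1..i])^R`, which `mp` detects; and since `j ≥ 1`, the last copy of `x` followed by `φ(x)`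
is a pseudo-palindrome centred at `i`, which `cmp` detects because that condition is closed
under shrinking the radius. Conversely the word found by `mp` and the word found by `cmp`
(at radius `mp ≤ cmp`) are suffixes of `w[1..i]` of the same length, hence equal.
-/

open List

/-- `x^k`: concatenation of `k` copies of the word `x`. -/
def listPow {α : Type*} (x : List α) (k : ℕ) : List α := (List.replicate k x).flatten

/-- Minimal period `mp_s^k(u)` taking values in `ℕ∞`: the least `m > s` such that
the prefix of `u` of length `k*m` is the `k`-th power of the prefix of length `m`;
`⊤` if no such `m` exists. -/
noncomputable def minPeriod {α : Type*} (k s : ℕ) (u : List α) : ℕ∞ :=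
  sInf {N : ℕ∞ | ∃ m : ℕ, N = (m : ℕ∞) ∧ s < m ∧ k * m ≤ u.length ∧
    listPow (u.take m) k <+: u}

/-- Length of the longest common prefix of two words. -/
def lcpLen {α : Type*} [DecidableEq α] (a b : List α) : ℕ :=
  ((a.zip b).takeWhile fun p => decide (p.1 = p.2)).length

/-- The antimorphic involution on words induced by a letter map `f`. -/
def phi {α : Type*} (f : α → α) (u : List α) : List α := (u.map f).reverse

/-- Centralized maximal pseudo-palindrome array entry `cmp_w[i]`. -/
noncomputable def cmpArr {α : Type*} (f : α → α) (w : List α) (i : ℕ) : ℕ :=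
  sSup {m : ℕ | m ≤ min i (w.length - i) ∧
    phi f ((w.drop (i - m)).take m) = (w.drop i).take m}

section Words

variable {α : Type*}

theorem listPow_length (x : List α) (k : ℕ) : (listPow x k).length = k * x.length := by
  simp [listPow]

theorem listPow_succ (x : List α) (k : ℕ) : listPow x (k + 1) = x ++ listPow x k := by
  simp [listPow, List.replicate_succ]

theorem listPow_succ' (x : List α) (k : ℕ) : listPow x (k + 1) = listPow x k ++ x := by
  induction k with
  | zero => simp [listPow]
  | succ n ih => rw [listPow_succ x (n + 1), ih, ← List.append_assoc, ← listPow_succ x n, ih]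

theorem listPow_reverse (x : List α) (k : ℕ) : (listPow x k).reverse = listPow x.reverse k := by
  induction k with
  | zero => simp [listPow]
  | succ n ih => rw [listPow_succ, List.reverse_append, ih, ← listPow_succ']

theorem prefix_listPow (x : List α) {k : ℕ} (hk : k ≠ 0) : x <+: listPow x k := by
  obtain ⟨k, rfl⟩ := Nat.exists_eq_succ_of_ne_zero hk
  rw [listPow_succ]
  exact List.prefix_append _ _

theorem suffix_listPow (x : List α) {k : ℕ} (hk : k ≠ 0) : x <:+ listPow x k := by
  obtain ⟨k, rfl⟩ := Nat.exists_eq_succ_of_ne_zero hk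
  rw [listPow_succ']
  exact List.suffix_append _ _

theorem phi_length (f : α → α) (u : List α) : (phi f u).length = u.length := by
  simp [phi]

theorem phi_append (f : α → α) (a b : List α) : phi f (a ++ b) = phi f b ++ phi f a := by
  simp [phi]

theorem append_infix_iff_take_drop {a b w : List α} :
    a ++ b <:+: w ↔ ∃ i, a <:+ w.take i ∧ b <+: w.drop i := by
  constructor
  · rintro ⟨p, t, rfl⟩
    have hsplit : p ++ (a ++ b) ++ t = (p ++ a) ++ (b ++ t) := by simp
    have hlen : (p ++ a).length = p.length + a.length := List.length_append
    refine ⟨p.length + a.length, ?_, ?_⟩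
    · rw [hsplit, List.take_left' hlen]
      exact List.suffix_append _ _
    · rw [hsplit, List.drop_left' hlen]
      exact List.prefix_append _ _
  · rintro ⟨i, ⟨p, hp⟩, ⟨t, ht⟩⟩
    refine ⟨p, t, ?_⟩
    rw [← List.take_append_drop i w, ← hp, ← ht]
    simp only [List.append_assoc]

end Words

section MinPeriod

variable {α : Type*}

/-- For `k ≥ 1` a word `x` with `x^k <+: u` is the prefix of `u` of length `|x|`, and
`k * |x| ≤ |u|` holds automatically. -/
theorem minPeriod_le_iff {k : ℕ} (hk : k ≠ 0) (s : ℕ) (u : List α) (m : ℕ) :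
    minPeriod k s u ≤ m ↔
      ∃ x : List α, s < x.length ∧ x.length ≤ m ∧ listPow x k <+: u := by
  constructor
  · intro h
    have hne : {N : ℕ∞ | ∃ m : ℕ, N = (m : ℕ∞) ∧ s < m ∧ k * m ≤ u.length ∧
        listPow (u.take m) k <+: u}.Nonempty :=
      Set.nonempty_iff_ne_empty.mpr fun hempty => by simp [minPeriod, hempty] at h
    obtain ⟨m', hm', hsm', hkm', hpre⟩ := csInf_mem hne
    have hlen : (u.take m').length = m' := by
      rw [List.length_take]
      exact min_eq_left (le_trans (Nat.le_mul_of_pos_left m' (Nat.pos_of_ne_zero hk)) hkm')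
    refine ⟨u.take m', by rwa [hlen], ?_, hpre⟩
    rwa [hlen, ← Nat.cast_le (α := ℕ∞), ← hm']
  · rintro ⟨x, hsx, hxm, hpre⟩
    have hx : x = u.take x.length := List.prefix_iff_eq_take.mp ((prefix_listPow x hk).trans hpre)
    have hkx : k * x.length ≤ u.length := listPow_length x k ▸ hpre.length_le
    calc minPeriod k s u ≤ x.length := sInf_le ⟨x.length, rfl, hsx, hkx, hx ▸ hpre⟩
      _ ≤ m := by exact_mod_cast hxm

theorem minPeriod_reverse_le_iff {k : ℕ} (hk : k ≠ 0) (s : ℕ) (v : List α) (m : ℕ) :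
    minPeriod k s v.reverse ≤ m ↔
      ∃ x : List α, s < x.length ∧ x.length ≤ m ∧ listPow x k <:+ v := by
  rw [minPeriod_le_iff hk]
  constructor
  · rintro ⟨x, hsx, hxm, hpre⟩
    refine ⟨x.reverse, by simpa using hsx, by simpa using hxm, ?_⟩
    rwa [← List.reverse_prefix, listPow_reverse, List.reverse_reverse]
  · rintro ⟨x, hsx, hxm, hsuf⟩
    refine ⟨x.reverse, by simpa using hsx, by simpa using hxm, ?_⟩
    rwa [← listPow_reverse, List.reverse_prefix]

end MinPeriod

section CmpArr

variable {α : Type*} (f : α → α) (w : List α) (i : ℕ)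

/-- The condition `φ(w[i-m+1..i]) = w[i+1..i+m]` behind `cmp_w[i] ≥ m`. -/
def IsCentredPseudoPal (m : ℕ) : Prop :=
  ∃ y : List α, y.length = m ∧ y <:+ w.take i ∧ phi f y <+: w.drop i

theorem suffix_take_iff {y : List α} (hy : y.length ≤ i) (hi : i ≤ w.length) :
    y <:+ w.take i ↔ y = (w.drop (i - y.length)).take y.length := by
  rw [List.suffix_iff_eq_drop, List.length_take_of_le hi, List.drop_take, Nat.sub_sub_self hy]

theorem cmpArr_condition_iff (m : ℕ) :
    (m ≤ min i (w.length - i) ∧ phi f ((w.drop (i - m)).take m) = (w.drop i).take m) ↔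
      IsCentredPseudoPal f w i m := by
  constructor
  · rintro ⟨hm, hphi⟩
    have hmi : m ≤ i := le_trans hm (min_le_left _ _)
    have hmn : m ≤ w.length - i := le_trans hm (min_le_right _ _)
    have hlen : ((w.drop (i - m)).take m).length = m := by
      simp only [List.length_take, List.length_drop]; omega
    refine ⟨_, hlen, ?_, hphi ▸ List.take_prefix _ _⟩
    rcases Nat.eq_zero_or_pos m with rfl | hpos
    · simp
    · rw [suffix_take_iff w i (by omega) (by omega), hlen]
  · rintro ⟨y, rfl, hsuf, hpre⟩
    have hyi : y.length ≤ i := le_trans hsuf.length_le (by simp)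
    have hyn : y.length ≤ w.length - i := by simpa [phi_length] using hpre.length_le
    refine ⟨le_min hyi hyn, ?_⟩
    rcases Nat.eq_zero_or_pos y.length with h0 | hpos
    · simp [List.length_eq_zero_iff.mp h0, phi]
    · rw [← (suffix_take_iff w i hyi (by omega)).mp hsuf, List.prefix_iff_eq_take.mp hpre,
        phi_length]

theorem IsCentredPseudoPal.mono {f : α → α} {w : List α} {i m M : ℕ}
    (h : IsCentredPseudoPal f w i M) (hmM : m ≤ M) : IsCentredPseudoPal f w i m := by
  obtain ⟨y, rfl, hsuf, hpre⟩ := h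
  refine ⟨y.drop (y.length - m), by simp only [List.length_drop]; omega,
    (List.drop_suffix _ _).trans hsuf, ?_⟩
  refine List.IsPrefix.trans ?_ hpre
  conv_rhs => rw [← List.take_append_drop (y.length - m) y, phi_append]
  exact List.prefix_append _ _

theorem le_cmpArr_iff (m : ℕ) :
    m ≤ cmpArr f w i ↔ IsCentredPseudoPal f w i m := by
  have hbdd : BddAbove {m : ℕ | m ≤ min i (w.length - i) ∧
      phi f ((w.drop (i - m)).take m) = (w.drop i).take m} := ⟨_, fun _ hm => hm.1⟩
  constructor
  · intro hm
    have hmem := Nat.sSup_mem ⟨0, by simp [phi]⟩ hbdd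
    exact ((cmpArr_condition_iff f w i _).mp hmem).mono hm
  · intro h
    exact le_csSup hbdd ((cmpArr_condition_iff f w i m).mpr h)

end CmpArr

theorem stmt9_general {α : Type*} (j s : ℕ) (hj : 1 ≤ j) (f : α → α) (w : List α) :
    (∃ x : List α, x ≠ [] ∧ s < x.length ∧ (listPow x j ++ phi f x) <:+: w) ↔
      (∃ i, 1 ≤ i ∧ i ≤ w.length ∧
        minPeriod j s ((w.take i).reverse) ≤ (cmpArr f w i : ℕ∞)) := by
  have hj0 : j ≠ 0 := by omega
  constructor
  · rintro ⟨x, -, hsx, hfactor⟩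
    obtain ⟨i, hpow, hphi⟩ := append_infix_iff_take_drop.mp hfactor
    have hx : x <:+ w.take i := (suffix_listPow x hj0).trans hpow
    have hxi : x.length ≤ i := hx.length_le.trans (by simp)
    have hxn : x.length ≤ w.length - i := by simpa [phi_length] using hphi.length_le
    refine ⟨i, by omega, by omega, ?_⟩
    calc minPeriod j s (w.take i).reverse ≤ x.length :=
          (minPeriod_reverse_le_iff hj0 s _ _).mpr ⟨x, hsx, le_rfl, hpow⟩
      _ ≤ cmpArr f w i := by exact_mod_cast (le_cmpArr_iff f w i _).mpr ⟨x, rfl, hx, hphi⟩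
  · rintro ⟨i, -, -, hle⟩
    obtain ⟨x, hsx, hxM, hpow⟩ := (minPeriod_reverse_le_iff hj0 s _ _).mp hle
    obtain ⟨y, hlen, hy, hphi⟩ := (le_cmpArr_iff f w i _).mp hxM
    have hyx : y = x := (List.suffix_of_suffix_length_le hy
      ((suffix_listPow x hj0).trans hpow) hlen.le).eq_of_length hlen
    subst hyx
    exact ⟨y, List.ne_nil_of_length_pos (by omega), hsx,
      append_infix_iff_take_drop.mpr ⟨i, hpow, hphi⟩⟩

/-- `w` contains a factor `x^j φ(x)` with `x` nonempty and `|x| > s`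
iff there exists `1 ≤ i ≤ n` with `mp_s^j((w[1..i])^R) ≤ cmp_w[i]`. -/
theorem stmt9 {α : Type*} (j s : ℕ) (hj : 1 ≤ j) (f : α → α)
    (hf : Function.Involutive f) (w : List α) :
    (∃ x : List α, x ≠ [] ∧ s < x.length ∧ (listPow x j ++ phi f x) <:+: w) ↔
      (∃ i, 1 ≤ i ∧ i ≤ w.length ∧
        minPeriod j s ((w.take i).reverse) ≤ (cmpArr f w i : ℕ∞)) :=
  stmt9_general j s hj f w
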